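/- arXiv:2208.13920 — 12 statements merged into one kernel-verified Lean document; each statement's English description precedes it below -/
import Mathlib

section
/- Let x be distance data on [n], let F ⊆ [n] be a set of frozen vertices such that every triangle containing a vertex of F is balanced under x, and let i ∈ [n] \ F. Let x' be obtained from x by applying the metric pivot at i only to pairs whose both endpoints lie outside F ∪ {i} (every pair meeting F ∪ {i} keeps its x-value). Then every triangle that is balanced under x is still balanced under x'; in particular, the pivoting step creates no new unbalanced triangle. -/
/-- The metric pivot at `i` applied only to pairs whose both endpoints lie outside
`F ∪ {i}`; every pair meeting `F ∪ {i}` keeps its `x`-value. -/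
noncomputable def metricPivotFrozen {n : ℕ} (x : Fin n → Fin n → ℝ)
    (F : Finset (Fin n)) (i : Fin n) : Fin n → Fin n → ℝ := fun j k =>
  if j ∈ F ∨ k ∈ F ∨ j = i ∨ k = i then x j k
  else if x i j + x i k < x j k then x i j + x i k
  else if x j k < |x i j - x i k| then |x i j - x i k|
  else x j k

/-- The triangle `{a, b, c}` is balanced under `x`: all three triangle inequalities hold. -/
def MetricBalanced {n : ℕ} (x : Fin n → Fin n → ℝ) (a b c : Fin n) : Prop :=
  x a b ≤ x a c + x b c ∧ x a c ≤ x a b + x b c ∧ x b c ≤ x a b + x a c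

lemma pivot_eq_of_mem {n : ℕ} (x : Fin n → Fin n → ℝ) (F : Finset (Fin n)) (i : Fin n)
    (j k : Fin n) (h : j ∈ F ∨ k ∈ F ∨ j = i ∨ k = i) :
    metricPivotFrozen x F i j k = x j k := by
  simp only [metricPivotFrozen, if_pos h]

lemma pivot_symm {n : ℕ} (x : Fin n → Fin n → ℝ) (hsymm : ∀ j k, x j k = x k j)
    (F : Finset (Fin n)) (i : Fin n) (j k : Fin n) :
    metricPivotFrozen x F i j k = metricPivotFrozen x F i k j := by
  unfold metricPivotFrozen
  have hc : (j ∈ F ∨ k ∈ F ∨ j = i ∨ k = i) ↔ (k ∈ F ∨ j ∈ F ∨ k = i ∨ j = i) := by tauto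
  rw [hsymm j k, hsymm i j, abs_sub_comm]
  by_cases h : k ∈ F ∨ j ∈ F ∨ k = i ∨ j = i
  · rw [if_pos (hc.mpr h), if_pos h]
  · rw [if_neg (fun hh => h (hc.mp hh)), if_neg h]
    ring_nf

lemma pivot_bounds {n : ℕ} (x : Fin n → Fin n → ℝ)
    (hsymm : ∀ j k, x j k = x k j) (hnonneg : ∀ j k, 0 ≤ x j k)
    (F : Finset (Fin n)) (i : Fin n) (hiF : i ∉ F)
    (hF : ∀ f ∈ F, ∀ j k : Fin n, f ≠ j → f ≠ k → j ≠ k → MetricBalanced x f j k)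
    (j k : Fin n) (hjk : j ≠ k) (hji : j ≠ i) (hki : k ≠ i) :
    |x i j - x i k| ≤ metricPivotFrozen x F i j k ∧
    metricPivotFrozen x F i j k ≤ x i j + x i k ∧
    (metricPivotFrozen x F i j k ≤ x j k ∨ metricPivotFrozen x F i j k ≤ |x i j - x i k|) ∧
    (x j k ≤ metricPivotFrozen x F i j k ∨ x i j + x i k ≤ metricPivotFrozen x F i j k) := by
  unfold metricPivotFrozen
  by_cases h : j ∈ F ∨ k ∈ F ∨ j = i ∨ k = i
  · rw [if_pos h]
    have hmem : j ∈ F ∨ k ∈ F := by tauto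
    have key : |x i j - x i k| ≤ x j k ∧ x j k ≤ x i j + x i k := by
      rcases hmem with hj | hk
      · have hji' : j ≠ i := fun e => hiF (e ▸ hj)
        obtain ⟨h1, h2, h3⟩ := hF j hj i k hji' hjk (fun e => hki e.symm)
        constructor
        · rw [abs_sub_le_iff]
          constructor <;> [linarith [hsymm j i]; linarith [hsymm j i]]
        · linarith [hsymm j i]
      · have hki' : k ≠ i := fun e => hiF (e ▸ hk)
        obtain ⟨h1, h2, h3⟩ := hF k hk i j hki' hjk.symm (fun hh => hji hh.symm)
        constructor
        · rw [abs_sub_le_iff]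
          constructor <;> [linarith [hsymm k i, hsymm k j]; linarith [hsymm k i, hsymm k j]]
        · linarith [hsymm k i, hsymm k j]
    exact ⟨key.1, key.2, Or.inl le_rfl, Or.inl le_rfl⟩
  · rw [if_neg h]
    have habs : |x i j - x i k| ≤ x i j + x i k := by
      rw [abs_sub_le_iff]
      constructor <;> linarith [hnonneg i j, hnonneg i k]
    split_ifs with h1 h2
    · exact ⟨habs, le_rfl, Or.inl (le_of_lt h1), Or.inr le_rfl⟩
    · exact ⟨le_rfl, habs, Or.inr le_rfl, Or.inl (le_of_lt h2)⟩
    · exact ⟨le_of_not_gt h2, le_of_not_gt h1, Or.inl le_rfl, Or.inl le_rfl⟩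

lemma pivot_tri {n : ℕ} (x : Fin n → Fin n → ℝ)
    (hsymm : ∀ j k, x j k = x k j) (hnonneg : ∀ j k, 0 ≤ x j k)
    (F : Finset (Fin n)) (i : Fin n) (hiF : i ∉ F)
    (hF : ∀ f ∈ F, ∀ j k : Fin n, f ≠ j → f ≠ k → j ≠ k → MetricBalanced x f j k)
    (a b c : Fin n) (hab : a ≠ b) (hac : a ≠ c) (hbc : b ≠ c)
    (hbal : x a b ≤ x a c + x b c) :
    metricPivotFrozen x F i a b ≤ metricPivotFrozen x F i a c + metricPivotFrozen x F i b c := by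
  by_cases ha : a = i
  · subst ha
    rw [pivot_eq_of_mem x F a a b (by tauto), pivot_eq_of_mem x F a a c (by tauto)]
    by_cases hb : b = a
    · exact absurd hb.symm hab
    by_cases hcc : c = a
    · exact absurd hcc.symm hac
    obtain ⟨hlo, _, _, _⟩ := pivot_bounds x hsymm hnonneg F a hiF hF b c hbc hb hcc
    have h1 : x a b - x a c ≤ |x a b - x a c| := le_abs_self _
    linarith
  by_cases hb : b = i
  · subst hb
    rw [pivot_eq_of_mem x F b a b (by tauto), pivot_eq_of_mem x F b b c (by tauto)]
    by_cases hcc : c = b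
    · exact absurd hcc.symm hbc
    obtain ⟨hlo, _, _, _⟩ := pivot_bounds x hsymm hnonneg F b hiF hF a c hac ha hcc
    have h1 : x b a - x b c ≤ |x b a - x b c| := le_abs_self _
    linarith [hsymm a b]
  by_cases hcc : c = i
  · subst hcc
    rw [pivot_eq_of_mem x F c a c (by tauto), pivot_eq_of_mem x F c b c (by tauto)]
    obtain ⟨_, hhi, _, _⟩ := pivot_bounds x hsymm hnonneg F c hiF hF a b hab ha hb
    linarith [hsymm c a, hsymm c b]
  · obtain ⟨lab, hab', cab, _⟩ := pivot_bounds x hsymm hnonneg F i hiF hF a b hab ha hb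
    obtain ⟨lac, _, _, dac⟩ := pivot_bounds x hsymm hnonneg F i hiF hF a c hac ha hcc
    obtain ⟨lbc, _, _, dbc⟩ := pivot_bounds x hsymm hnonneg F i hiF hF b c hbc hb hcc
    have t1 : |x i a - x i b| ≤ |x i a - x i c| + |x i b - x i c| := by
      calc |x i a - x i b| ≤ |x i a - x i c| + |x i c - x i b| := abs_sub_le _ _ _
        _ = |x i a - x i c| + |x i b - x i c| := by rw [abs_sub_comm (x i c)]
    have e1 : x i a - x i c ≤ |x i a - x i c| := le_abs_self _
    have e2 : x i b - x i c ≤ |x i b - x i c| := le_abs_self _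
    rcases dac with h1 | h1 <;> rcases dbc with h2 | h2 <;> rcases cab with h3 | h3 <;> linarith

theorem stmt1 {n : ℕ} (x : Fin n → Fin n → ℝ)
    (hsymm : ∀ j k, x j k = x k j) (hnonneg : ∀ j k, 0 ≤ x j k)
    (F : Finset (Fin n)) (i : Fin n) (hiF : i ∉ F)
    (hF : ∀ f ∈ F, ∀ j k : Fin n, f ≠ j → f ≠ k → j ≠ k → MetricBalanced x f j k) :
    ∀ a b c : Fin n, a ≠ b → a ≠ c → b ≠ c →
      MetricBalanced x a b c → MetricBalanced (metricPivotFrozen x F i) a b c := by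
  intro a b c hab hac hbc hbal
  obtain ⟨h1, h2, h3⟩ := hbal
  have ps := pivot_symm x hsymm F i
  refine ⟨?_, ?_, ?_⟩
  · exact pivot_tri x hsymm hnonneg F i hiF hF a b c hab hac hbc h1
  · have := pivot_tri x hsymm hnonneg F i hiF hF a c b hac hab hbc.symm
      (by rw [hsymm c b]; exact h2)
    rwa [ps c b] at this
  · have := pivot_tri x hsymm hnonneg F i hiF hF b c a hbc hab.symm hac.symm
      (by rw [hsymm b a, hsymm c a]; exact h3)
    rwa [ps b a, ps c a] at this
end

section
/- Let x be distance data on [n] and let u, v, i, j be four distinct points such that the edge uv is in excess in both triangles uvi and uvj, i.e., x(u,v) > x(i,u)+x(i,v) and x(u,v) > x(j,u)+x(j,v), and such that pivoting at i decreases x(u,v) at least as much as pivoting at j would, i.e., x(i,u)+x(i,v) ≤ x(j,u)+x(j,v). Let x' be the result of the metric pivot at i (so x'(u,v) = x(i,u)+x(i,v)). Then the triangle uvj is balanced under x': |x'(u,j) − x'(v,j)| ≤ x'(u,v) ≤ x'(u,j) + x'(v,j). -/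
/-- The metric pivot at a point `i`. -/
noncomputable def metricPivot {n : ℕ} (x : Fin n → Fin n → ℝ) (i : Fin n) :
    Fin n → Fin n → ℝ := fun j k =>
  if j = i ∨ k = i then x j k
  else if x i j + x i k < x j k then x i j + x i k
  else if x j k < |x i j - x i k| then |x i j - x i k|
  else x j k

lemma pivot_clamp {n : ℕ} (x : Fin n → Fin n → ℝ) (hnonneg : ∀ a b, 0 ≤ x a b)
    (i a b : Fin n) (ha : a ≠ i) (hb : b ≠ i) :
    |x i a - x i b| ≤ metricPivot x i a b ∧ metricPivot x i a b ≤ x i a + x i b ∧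
      min (x a b) (x i a + x i b) ≤ metricPivot x i a b := by
  have habs : |x i a - x i b| ≤ x i a + x i b :=
    abs_le.mpr ⟨by linarith [hnonneg i a, hnonneg i b], by linarith [hnonneg i a, hnonneg i b]⟩
  unfold metricPivot
  simp only [ha, hb, or_self, if_false]
  split_ifs with h1 h2
  · exact ⟨habs, le_refl _, min_le_right _ _⟩
  · exact ⟨le_refl _, habs, le_trans (min_le_left _ _) (le_of_lt h2)⟩
  · exact ⟨le_of_not_gt h2, le_of_not_gt h1, min_le_left _ _⟩

theorem stmt2 {n : ℕ} (x : Fin n → Fin n → ℝ)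
    (hsymm : ∀ a b, x a b = x b a) (hnonneg : ∀ a b, 0 ≤ x a b)
    (u v i j : Fin n)
    (huv : u ≠ v) (hui : u ≠ i) (huj : u ≠ j) (hvi : v ≠ i) (hvj : v ≠ j) (hij : i ≠ j)
    (h1 : x i u + x i v < x u v) (h2 : x j u + x j v < x u v)
    (h3 : x i u + x i v ≤ x j u + x j v) :
    metricPivot x i u v = x i u + x i v ∧
    |metricPivot x i u j - metricPivot x i v j| ≤ metricPivot x i u v ∧
    metricPivot x i u v ≤ metricPivot x i u j + metricPivot x i v j := by
  have hji : j ≠ i := hij.symm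
  obtain ⟨hu1, hu2, hu3⟩ := pivot_clamp x hnonneg i u j hui hji
  obtain ⟨hv1, hv2, hv3⟩ := pivot_clamp x hnonneg i v j hvi hji
  have huv' : metricPivot x i u v = x i u + x i v := by
    unfold metricPivot
    simp only [hui, hvi, or_self, if_false, if_pos h1]
  refine ⟨huv', ?_, ?_⟩
  · rw [huv', abs_sub_le_iff]
    have a1 : x i j - x i v ≤ |x i v - x i j| := by rw [abs_sub_comm]; exact le_abs_self _
    have a2 : x i j - x i u ≤ |x i u - x i j| := by rw [abs_sub_comm]; exact le_abs_self _
    constructor <;> linarith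
  · rw [huv']
    have hs1 : x j u = x u j := hsymm j u
    have hs2 : x j v = x v j := hsymm j v
    have a1 : x i v - x i j ≤ |x i v - x i j| := le_abs_self _
    have a2 : x i u - x i j ≤ |x i u - x i j| := le_abs_self _
    rcases min_cases (x u j) (x i u + x i j) with ⟨e1, _⟩ | ⟨e1, _⟩ <;>
      rcases min_cases (x v j) (x i v + x i j) with ⟨e2, _⟩ | ⟨e2, _⟩ <;>
      rw [e1] at hu3 <;> rw [e2] at hv3 <;> linarith
end

section
/- Let x be distance data on [n] and let u, v, i, j be four distinct points such that the edge uv is in deficit in both triangles uvi and uvj, i.e., x(u,v) < |x(i,u)−x(i,v)| and x(u,v) < |x(j,u)−x(j,v)|, and such that pivoting at i increases x(u,v) at least as much as pivoting at j would, i.e., |x(i,u)−x(i,v)| ≥ |x(j,u)−x(j,v)|. Let x' be the result of the metric pivot at i (so x'(u,v) = |x(i,u)−x(i,v)|). Then the triangle uvj is balanced under x': |x'(u,j) − x'(v,j)| ≤ x'(u,v) ≤ x'(u,j) + x'(v,j). -/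
set_option maxHeartbeats 2000000


theorem stmt3 {n : ℕ} (x : Fin n → Fin n → ℝ)
    (hsymm : ∀ a b, x a b = x b a) (hnonneg : ∀ a b, 0 ≤ x a b)
    (u v i j : Fin n)
    (huv : u ≠ v) (hui : u ≠ i) (huj : u ≠ j) (hvi : v ≠ i) (hvj : v ≠ j) (hij : i ≠ j)
    (h1 : x u v < |x i u - x i v|) (h2 : x u v < |x j u - x j v|)
    (h3 : |x j u - x j v| ≤ |x i u - x i v|) :
    metricPivot x i u v = |x i u - x i v| ∧
    |metricPivot x i u j - metricPivot x i v j| ≤ metricPivot x i u v ∧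
    metricPivot x i u v ≤ metricPivot x i u j + metricPivot x i v j := by
  have key : ∀ (A B C p q : ℝ), 0 ≤ A → 0 ≤ B → 0 ≤ C → |p - q| ≤ |A - B| →
      |(if A + C < p then A + C else if p < |A - C| then |A - C| else p) -
        (if B + C < q then B + C else if q < |B - C| then |B - C| else q)| ≤ |A - B| ∧
      |A - B| ≤ (if A + C < p then A + C else if p < |A - C| then |A - C| else p) +
        (if B + C < q then B + C else if q < |B - C| then |B - C| else q) := by
    intro A B C p q hA hB hC hpq
    obtain ⟨e1, f1⟩ | ⟨e1, f1⟩ := abs_cases (A - B) <;>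
    obtain ⟨e2, f2⟩ | ⟨e2, f2⟩ := abs_cases (A - C) <;>
    obtain ⟨e3, f3⟩ | ⟨e3, f3⟩ := abs_cases (B - C) <;>
    obtain ⟨e4, f4⟩ | ⟨e4, f4⟩ := abs_cases (p - q) <;>
    split_ifs <;>
    exact ⟨abs_le.mpr ⟨by linarith, by linarith⟩, by linarith⟩
  have hji : j ≠ i := Ne.symm hij
  have hne1 : ¬(u = i ∨ v = i) := by simp [hui, hvi]
  have hne2 : ¬(u = i ∨ j = i) := by simp [hui, hji]
  have hne3 : ¬(v = i ∨ j = i) := by simp [hvi, hji]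
  have h2' : |x u j - x v j| ≤ |x i u - x i v| := by
    rw [hsymm u j, hsymm v j]; exact h3
  have habs_le : |x i u - x i v| ≤ x i u + x i v := by
    rcases abs_cases (x i u - x i v) with ⟨e, f⟩ | ⟨e, f⟩ <;>
      linarith [hnonneg i u, hnonneg i v]
  have hfst : metricPivot x i u v = |x i u - x i v| := by
    unfold metricPivot
    rw [if_neg hne1, if_neg (by linarith : ¬ x i u + x i v < x u v), if_pos h1]
  have hk := key (x i u) (x i v) (x i j) (x u j) (x v j)
    (hnonneg i u) (hnonneg i v) (hnonneg i j) h2'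
  refine ⟨hfst, ?_, ?_⟩
  · rw [hfst]
    unfold metricPivot
    rw [if_neg hne2, if_neg hne3]
    exact hk.1
  · rw [hfst]
    unfold metricPivot
    rw [if_neg hne2, if_neg hne3]
    exact hk.2
end

section
/- Let x be distance data on [n] and let 𝒯' be the set of triangles that are unbalanced under x. Then for every metric y on [n] and every fractional packing p of 𝒯' (i.e., p : 𝒯' → ℝ≥0 with ∑_{t ∈ 𝒯' : e ⊂ t} p_t ≤ 1 for every unordered pair e), one has ∑_{t ∈ 𝒯'} p_t ≤ |{ e : x(e) ≠ y(e) }|. In particular, the value of any fractional packing of unbalanced triangles is a lower bound on the ℓ0 distance from x to the set of metrics. -/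
open Finset
open scoped Classical

/-- `t` is a triangle (a set of three distinct points) that is unbalanced under `x`. -/
def IsUnbalancedTriangle {n : ℕ} (x : Fin n → Fin n → ℝ) (t : Finset (Fin n)) : Prop :=
  ∃ a b c : Fin n, a ≠ b ∧ a ≠ c ∧ b ≠ c ∧ t = {a, b, c} ∧ ¬ MetricBalanced x a b c

theorem stmt4 {n : ℕ} (x y : Fin n → Fin n → ℝ)
    (hxsymm : ∀ a b, x a b = x b a) (hxnonneg : ∀ a b, 0 ≤ x a b)
    (hysymm : ∀ a b, y a b = y b a) (hynonneg : ∀ a b, 0 ≤ y a b)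
    (hymetric : ∀ a b c : Fin n, a ≠ b → a ≠ c → b ≠ c → y a b ≤ y a c + y b c)
    -- a fractional packing of the unbalanced triangles:
    (p : Finset (Fin n) → ℝ)
    (hp0 : ∀ t, 0 ≤ p t)
    (hsupp : ∀ t, p t ≠ 0 → IsUnbalancedTriangle x t)
    (hpack : ∀ a b : Fin n, a ≠ b →
      ∑ t ∈ Finset.univ.filter (fun t : Finset (Fin n) => a ∈ t ∧ b ∈ t), p t ≤ 1) :
    ∑ t : Finset (Fin n), p t ≤
      ((Finset.univ.filter
        (fun e : Fin n × Fin n => e.1 < e.2 ∧ x e.1 e.2 ≠ y e.1 e.2)).card : ℝ) := by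
  classical
  set B := Finset.univ.filter
      (fun e : Fin n × Fin n => e.1 < e.2 ∧ x e.1 e.2 ≠ y e.1 e.2) with hB
  -- every triangle with positive weight contains a bad edge
  have key : ∀ t : Finset (Fin n), p t ≠ 0 →
      ∃ e : Fin n × Fin n, e ∈ B ∧ e.1 ∈ t ∧ e.2 ∈ t := by
    intro t hpt
    obtain ⟨a, b, c, hab, hac, hbc, ht, hnb⟩ := hsupp t hpt
    by_contra h
    push_neg at h
    have hxy : ∀ u v : Fin n, u ∈ t → v ∈ t → u ≠ v → x u v = y u v := by
      intro u v hu hv huv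
      rcases lt_or_gt_of_ne huv with h' | h'
      · by_contra hne
        exact (h (u, v) (by simp [hB, h', hne]) hu) hv
      · by_contra hne
        have hne' : x v u ≠ y v u := by rw [hxsymm v u, hysymm v u]; exact hne
        exact (h (v, u) (by simp [hB, h', hne']) hv) hu
    have ha : a ∈ t := by simp [ht]
    have hb : b ∈ t := by simp [ht]
    have hc : c ∈ t := by simp [ht]
    apply hnb
    refine ⟨?_, ?_, ?_⟩
    · rw [hxy a b ha hb hab, hxy a c ha hc hac, hxy b c hb hc hbc]
      exact hymetric a b c hab hac hbc
    · rw [hxy a b ha hb hab, hxy a c ha hc hac, hxy b c hb hc hbc]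
      have := hymetric a c b hac hab hbc.symm
      rwa [hysymm c b] at this
    · rw [hxy a b ha hb hab, hxy a c ha hc hac, hxy b c hb hc hbc]
      have := hymetric b c a hbc hab.symm hac.symm
      rw [hysymm b a, hysymm c a] at this
      linarith
  rcases Nat.eq_zero_or_pos n with hn | hn
  · subst hn
    have hz : ∀ t : Finset (Fin 0), p t = 0 := by
      intro t
      by_contra hpt
      obtain ⟨a, _, _, _⟩ := hsupp t hpt
      exact a.elim0
    simp [hz]
  · haveI : NeZero n := ⟨hn.ne'⟩
    set S := Finset.univ.filter (fun t : Finset (Fin n) => p t ≠ 0) with hS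
    have hsum : ∑ t : Finset (Fin n), p t = ∑ t ∈ S, p t :=
      (Finset.sum_filter_ne_zero _).symm
    set g : Finset (Fin n) → Fin n × Fin n :=
      fun t => if h : p t ≠ 0 then (key t h).choose else (0, 0) with hg
    have hmaps : ∀ t ∈ S, g t ∈ B := by
      intro t ht
      rw [hS, Finset.mem_filter] at ht
      rw [hg]
      simp only [dif_pos ht.2]
      exact (key t ht.2).choose_spec.1
    have hfiber := Finset.sum_fiberwise_of_maps_to hmaps p
    rw [hsum, ← hfiber]
    have hbound : ∀ e ∈ B, ∑ t ∈ S.filter (fun t => g t = e), p t ≤ 1 := by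
      intro e he
      rw [hB, Finset.mem_filter] at he
      refine le_trans ?_ (hpack e.1 e.2 he.2.1.ne)
      apply Finset.sum_le_sum_of_subset_of_nonneg
      · intro t ht
        rw [Finset.mem_filter] at ht
        obtain ⟨ht1, ht2⟩ := ht
        rw [hS, Finset.mem_filter] at ht1
        have hpt := ht1.2
        rw [hg] at ht2
        simp only [dif_pos hpt] at ht2
        have hsp := (key t hpt).choose_spec
        rw [ht2] at hsp
        simp [hsp.2.1, hsp.2.2]
      · intro t _ _; exact hp0 t
    calc ∑ e ∈ B, ∑ t ∈ S.filter (fun t => g t = e), p t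
        ≤ ∑ _e ∈ B, (1 : ℝ) := Finset.sum_le_sum hbound
      _ = (B.card : ℝ) := by simp
end

section
/- Let x be distance data on [n], let i ∈ [n], and let x' be the result of the ultrametric pivot at i. Then every triple of points of [n] \ {i} that is ultrametric-balanced under x is still ultrametric-balanced under x'; in particular, the ultrametric pivoting step creates no new ultrametric-unbalanced triple. -/
noncomputable def ultraPivot {n : ℕ} (x : Fin n → Fin n → ℝ) (i : Fin n) :
    Fin n → Fin n → ℝ := fun j k =>
  if j = i ∨ k = i then x j k
  else if x i j = x i k then min (x j k) (x i j)
  else max (x i j) (x i k)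

def UltraBalanced {n : ℕ} (x : Fin n → Fin n → ℝ) (a b c : Fin n) : Prop :=
  x a b ≤ max (x a c) (x b c) ∧ x a c ≤ max (x a b) (x b c) ∧ x b c ≤ max (x a b) (x a c)

lemma key (a b c d e f : ℝ) (h1 : d ≤ max e f) (h2 : e ≤ max d f) (h3 : f ≤ max d e) :
    (if a = b then min d a else max a b) ≤
      max (if a = c then min e a else max a c) (if b = c then min f b else max b c) ∧
    (if a = c then min e a else max a c) ≤
      max (if a = b then min d a else max a b) (if b = c then min f b else max b c) ∧
    (if b = c then min f b else max b c) ≤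
      max (if a = b then min d a else max a b) (if a = c then min e a else max a c) := by
  rcases eq_or_ne a b with hab | hab
  · subst hab
    rcases eq_or_ne a c with hac | hac
    · subst hac
      rw [if_pos rfl, if_pos rfl, if_pos rfl]
      refine ⟨?_, ?_, ?_⟩
      · rcases le_max_iff.mp h1 with h | h
        · exact le_max_of_le_left (min_le_min h le_rfl)
        · exact le_max_of_le_right (min_le_min h le_rfl)
      · rcases le_max_iff.mp h2 with h | h
        · exact le_max_of_le_left (min_le_min h le_rfl)
        · exact le_max_of_le_right (min_le_min h le_rfl)
      · rcases le_max_iff.mp h3 with h | h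
        · exact le_max_of_le_left (min_le_min h le_rfl)
        · exact le_max_of_le_right (min_le_min h le_rfl)
    · rw [if_pos rfl, if_neg hac, if_neg hac]
      exact ⟨le_max_of_le_left ((min_le_right d a).trans (le_max_left a c)),
        le_max_of_le_right le_rfl, le_max_of_le_right le_rfl⟩
  · rcases eq_or_ne a c with hac | hac
    · subst hac
      have hba : b ≠ a := fun h => hab h.symm
      rw [if_neg hab, if_pos rfl, if_neg hba]
      exact ⟨le_max_of_le_right (max_comm a b).le,
        le_max_of_le_left ((min_le_right e a).trans (le_max_left a b)),
        le_max_of_le_left (max_comm b a).le⟩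
    · rcases eq_or_ne b c with hbc | hbc
      · subst hbc
        rw [if_neg hab, if_neg hac, if_pos rfl]
        exact ⟨le_max_left _ _, le_max_of_le_left le_rfl,
          le_max_of_le_left ((min_le_right f b).trans (le_max_right a b))⟩
      · rw [if_neg hab, if_neg hac, if_neg hbc]
        exact ⟨max_le (le_max_of_le_left (le_max_left a c)) (le_max_of_le_right (le_max_left b c)),
          max_le (le_max_of_le_left (le_max_left a b)) (le_max_of_le_right (le_max_right b c)),
          max_le (le_max_of_le_left (le_max_right a b)) (le_max_of_le_right (le_max_right a c))⟩

theorem stmt7 {n : ℕ} (x : Fin n → Fin n → ℝ)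
    (hsymm : ∀ a b, x a b = x b a) (hnonneg : ∀ a b, 0 ≤ x a b) (i : Fin n) :
    ∀ j k l : Fin n, j ≠ i → k ≠ i → l ≠ i → j ≠ k → j ≠ l → k ≠ l →
      UltraBalanced x j k l → UltraBalanced (ultraPivot x i) j k l := by
  intro j k l hji hki hli hjk hjl hkl h
  obtain ⟨h1, h2, h3⟩ := h
  unfold UltraBalanced ultraPivot
  rw [if_neg (by tauto : ¬(j = i ∨ k = i)), if_neg (by tauto : ¬(j = i ∨ l = i)),
      if_neg (by tauto : ¬(k = i ∨ l = i))]
  exact key (x i j) (x i k) (x i l) (x j k) (x j l) (x k l) h1 h2 h3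
end

section
/- Let G be a finite simple graph, let 0 < ε ≤ 1/50, and let C be an important group of vertices of G. Then every two vertices u₁, u₂ ∈ C agree, i.e., |N(u₁) Δ N(u₂)| ≤ ε·min(|N(u₁)|, |N(u₂)|). -/
open Finset

/-- `C` is an important group of vertices: every `v ∈ C` has at most an `ε/8`
fraction of its neighbors outside `C` and is adjacent to at least a `(1 - ε/8)`
fraction of the vertices of `C`. -/
def ImportantGroup {V : Type*} [Fintype V] [DecidableEq V]
    (G : SimpleGraph V) [DecidableRel G.Adj] (ε : ℝ) (C : Finset V) : Prop :=
  ∀ v ∈ C, ((G.neighborFinset v \ C).card : ℝ) ≤ ε / 8 * ((G.neighborFinset v).card : ℝ) ∧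
    (1 - ε / 8) * (C.card : ℝ) ≤ ((G.neighborFinset v ∩ C).card : ℝ)

/-- `u` and `v` agree: `|N(u) Δ N(v)| ≤ ε · min(|N(u)|, |N(v)|)`. -/
def Agree {V : Type*} [Fintype V] [DecidableEq V]
    (G : SimpleGraph V) [DecidableRel G.Adj] (ε : ℝ) (u v : V) : Prop :=
  ((symmDiff (G.neighborFinset u) (G.neighborFinset v)).card : ℝ) ≤
    ε * min ((G.neighborFinset u).card : ℝ) ((G.neighborFinset v).card : ℝ)

set_option maxHeartbeats 1000000 in
theorem stmt10 {V : Type*} [Fintype V] [DecidableEq V]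
    (G : SimpleGraph V) [DecidableRel G.Adj]
    (ε : ℝ) (hε : 0 < ε) (hε' : ε ≤ 1 / 50)
    (C : Finset V) (hC : ImportantGroup G ε C) :
    ∀ u₁ ∈ C, ∀ u₂ ∈ C, Agree G ε u₁ u₂ := by
  intro u₁ h₁ u₂ h₂
  obtain ⟨hA₁, hB₁⟩ := hC u₁ h₁
  obtain ⟨hA₂, hB₂⟩ := hC u₂ h₂
  unfold Agree
  set N₁ := G.neighborFinset u₁ with hN₁
  set N₂ := G.neighborFinset u₂ with hN₂
  have hsub : symmDiff N₁ N₂ ⊆ ((N₁ \ C) ∪ (N₂ \ C)) ∪ ((C \ N₁) ∪ (C \ N₂)) := by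
    intro x hx
    simp only [Finset.mem_symmDiff, Finset.mem_union, Finset.mem_sdiff] at *
    by_cases hxC : x ∈ C <;> tauto
  have hΔ : ((symmDiff N₁ N₂).card : ℝ) ≤
      ((N₁ \ C).card : ℝ) + ((N₂ \ C).card : ℝ) + ((C \ N₁).card : ℝ) + ((C \ N₂).card : ℝ) := by
    have h1 := (card_le_card hsub).trans (card_union_le _ _)
    have h2 := card_union_le (N₁ \ C) (N₂ \ C)
    have h3 := card_union_le (C \ N₁) (C \ N₂)
    have : (symmDiff N₁ N₂).card ≤
        (N₁ \ C).card + (N₂ \ C).card + ((C \ N₁).card + (C \ N₂).card) := by omega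
    exact_mod_cast this.trans_eq (by ring)
  have key : ∀ u ∈ C, ((C \ G.neighborFinset u).card : ℝ)
      = (C.card : ℝ) - ((G.neighborFinset u ∩ C).card : ℝ) := by
    intro u hu
    have := Finset.card_sdiff_add_card_inter C (G.neighborFinset u)
    have hcomm : C ∩ G.neighborFinset u = G.neighborFinset u ∩ C := Finset.inter_comm _ _
    rw [hcomm] at this
    have : ((C \ G.neighborFinset u).card + (G.neighborFinset u ∩ C).card : ℝ) = C.card := by
      exact_mod_cast this
    linarith
  have hCN₁ : ((C \ N₁).card : ℝ) ≤ ε / 8 * C.card := by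
    have := key u₁ h₁; rw [← hN₁] at this; linarith
  have hCN₂ : ((C \ N₂).card : ℝ) ≤ ε / 8 * C.card := by
    have := key u₂ h₂; rw [← hN₂] at this; linarith
  -- nᵢ(1 - ε/8) ≤ c  and  (1-ε/8)c ≤ nᵢ
  have keyn : ∀ u ∈ C, ((G.neighborFinset u).card : ℝ)
      = ((G.neighborFinset u \ C).card : ℝ) + ((G.neighborFinset u ∩ C).card : ℝ) := by
    intro u hu
    have := Finset.card_sdiff_add_card_inter (G.neighborFinset u) C
    exact_mod_cast this.symm
  have hle₁ : ((N₁ ∩ C).card : ℝ) ≤ C.card := by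
    exact_mod_cast Finset.card_le_card (Finset.inter_subset_right)
  have hle₂ : ((N₂ ∩ C).card : ℝ) ≤ C.card := by
    exact_mod_cast Finset.card_le_card (Finset.inter_subset_right)
  have hle₁' : ((N₁ ∩ C).card : ℝ) ≤ N₁.card := by
    exact_mod_cast Finset.card_le_card (Finset.inter_subset_left)
  have hle₂' : ((N₂ ∩ C).card : ℝ) ≤ N₂.card := by
    exact_mod_cast Finset.card_le_card (Finset.inter_subset_left)
  have hk₁ := keyn u₁ h₁; rw [← hN₁] at hk₁
  have hk₂ := keyn u₂ h₂; rw [← hN₂] at hk₂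
  have hn₁ : (N₁.card : ℝ) ≤ ε / 8 * N₁.card + C.card := by linarith
  have hn₂ : (N₂.card : ℝ) ≤ ε / 8 * N₂.card + C.card := by linarith
  have hcn₁ : (1 - ε / 8) * C.card ≤ (N₁.card : ℝ) := by linarith
  have hcn₂ : (1 - ε / 8) * C.card ≤ (N₂.card : ℝ) := by linarith
  set m : ℝ := min ((N₁.card : ℝ)) ((N₂.card : ℝ)) with hm
  have hmc : (1 - ε / 8) * C.card ≤ m := le_min hcn₁ hcn₂
  have hm₁ : m ≤ (N₁.card : ℝ) := min_le_left _ _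
  have hm₂ : m ≤ (N₂.card : ℝ) := min_le_right _ _
  have hcpos : (0 : ℝ) ≤ C.card := Nat.cast_nonneg _
  have hn₁pos : (0 : ℝ) ≤ N₁.card := Nat.cast_nonneg _
  have hn₂pos : (0 : ℝ) ≤ N₂.card := Nat.cast_nonneg _
  -- ε-scaled product facts
  have hεn₁ : ε * (N₁.card : ℝ) ≤ 1 / 50 * N₁.card := mul_le_mul_of_nonneg_right hε' hn₁pos
  have hεn₂ : ε * (N₂.card : ℝ) ≤ 1 / 50 * N₂.card := mul_le_mul_of_nonneg_right hε' hn₂pos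
  have hεc : ε * (C.card : ℝ) ≤ 1 / 50 * C.card := mul_le_mul_of_nonneg_right hε' hcpos
  have h399₁ : (399 / 400 : ℝ) * N₁.card ≤ C.card := by linarith
  have h399₂ : (399 / 400 : ℝ) * N₂.card ≤ C.card := by linarith
  have h399c : (399 / 400 : ℝ) * C.card ≤ m := by linarith
  have p1 : ε * ((399 / 400 : ℝ) * N₁.card) ≤ ε * C.card := mul_le_mul_of_nonneg_left h399₁ hε.le
  have p2 : ε * ((399 / 400 : ℝ) * N₂.card) ≤ ε * C.card := mul_le_mul_of_nonneg_left h399₂ hε.le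
  have p3 : ε * ((399 / 400 : ℝ) * C.card) ≤ ε * m := mul_le_mul_of_nonneg_left h399c hε.le
  ring_nf at p1 p2 p3 hA₁ hA₂ hCN₁ hCN₂ hΔ ⊢
  linarith
end

section
/- Let G be a finite simple graph, let 0 < ε ≤ 1/50, and let C₁ and C₂ be disjoint important groups of vertices of G, each containing at least 2 vertices. Then no vertex of C₁ agrees with any vertex of C₂: for all u₁ ∈ C₁ and u₂ ∈ C₂ one has |N(u₁) Δ N(u₂)| > ε·min(|N(u₁)|, |N(u₂)|). -/
set_option maxHeartbeats 1000000


open Finset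

theorem stmt11 {V : Type*} [Fintype V] [DecidableEq V]
    (G : SimpleGraph V) [DecidableRel G.Adj]
    (ε : ℝ) (hε : 0 < ε) (hε' : ε ≤ 1 / 50)
    (C₁ C₂ : Finset V) (hdisj : Disjoint C₁ C₂)
    (hcard₁ : 2 ≤ C₁.card) (hcard₂ : 2 ≤ C₂.card)
    (hC₁ : ImportantGroup G ε C₁) (hC₂ : ImportantGroup G ε C₂) :
    ∀ u₁ ∈ C₁, ∀ u₂ ∈ C₂,
      ε * min ((G.neighborFinset u₁).card : ℝ) ((G.neighborFinset u₂).card : ℝ) <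
        ((symmDiff (G.neighborFinset u₁) (G.neighborFinset u₂)).card : ℝ) := by
  intro u₁ hu₁ u₂ hu₂
  set A := G.neighborFinset u₁ with hA
  set B := G.neighborFinset u₂ with hB
  obtain ⟨h1a, h1b⟩ := hC₁ u₁ hu₁
  obtain ⟨h2a, h2b⟩ := hC₂ u₂ hu₂
  rw [← hA] at h1a h1b
  rw [← hB] at h2a h2b
  -- |A| = |A∩C₁| + |A\C₁|
  have hsplitA : ((A ∩ C₁).card : ℝ) + ((A \ C₁).card : ℝ) = (A.card : ℝ) := by
    exact_mod_cast congrArg (Nat.cast : ℕ → ℝ) (Finset.card_inter_add_card_sdiff A C₁)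
  have hsplitB : ((B ∩ C₂).card : ℝ) + ((B \ C₂).card : ℝ) = (B.card : ℝ) := by
    exact_mod_cast congrArg (Nat.cast : ℕ → ℝ) (Finset.card_inter_add_card_sdiff B C₂)
  -- B ∩ C₁ ⊆ B \ C₂ and A ∩ C₂ ⊆ A \ C₁
  have hBC1 : ((B ∩ C₁).card : ℝ) ≤ ε / 8 * (B.card : ℝ) := by
    refine le_trans ?_ h2a
    have : B ∩ C₁ ⊆ B \ C₂ := by
      intro x hx
      simp only [mem_inter, mem_sdiff] at *
      exact ⟨hx.1, fun h => (Finset.disjoint_left.mp hdisj hx.2) h⟩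
    exact_mod_cast Finset.card_le_card this
  have hAC2 : ((A ∩ C₂).card : ℝ) ≤ ε / 8 * (A.card : ℝ) := by
    refine le_trans ?_ h1a
    have : A ∩ C₂ ⊆ A \ C₁ := by
      intro x hx
      simp only [mem_inter, mem_sdiff] at *
      exact ⟨hx.1, fun h => (Finset.disjoint_left.mp hdisj h) hx.2⟩
    exact_mod_cast Finset.card_le_card this
  -- |A\B| ≥ |A∩C₁| - |B∩C₁|
  have hAB : ((A ∩ C₁).card : ℝ) - ((B ∩ C₁).card : ℝ) ≤ ((A \ B).card : ℝ) := by
    have h1 : ((A ∩ C₁) \ B).card + ((A ∩ C₁) ∩ B).card = (A ∩ C₁).card :=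
      Finset.card_sdiff_add_card_inter _ _
    have h2 : (A ∩ C₁) \ B ⊆ A \ B := sdiff_subset_sdiff inter_subset_left le_rfl
    have h3 : (A ∩ C₁) ∩ B ⊆ B ∩ C₁ := by
      intro x hx; simp only [mem_inter] at *; exact ⟨hx.2, hx.1.2⟩
    have h2' := Finset.card_le_card h2
    have h3' := Finset.card_le_card h3
    have := h1
    push_cast [← h1]
    have := (Nat.cast_le (α := ℝ)).mpr h2'
    have := (Nat.cast_le (α := ℝ)).mpr h3'
    push_cast at *
    linarith
  have hBA : ((B ∩ C₂).card : ℝ) - ((A ∩ C₂).card : ℝ) ≤ ((B \ A).card : ℝ) := by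
    have h1 : ((B ∩ C₂) \ A).card + ((B ∩ C₂) ∩ A).card = (B ∩ C₂).card :=
      Finset.card_sdiff_add_card_inter _ _
    have h2 : (B ∩ C₂) \ A ⊆ B \ A := sdiff_subset_sdiff inter_subset_left le_rfl
    have h3 : (B ∩ C₂) ∩ A ⊆ A ∩ C₂ := by
      intro x hx; simp only [mem_inter] at *; exact ⟨hx.2, hx.1.2⟩
    have h2' := (Nat.cast_le (α := ℝ)).mpr (Finset.card_le_card h2)
    have h3' := (Nat.cast_le (α := ℝ)).mpr (Finset.card_le_card h3)
    have h1' : (((B ∩ C₂) \ A).card : ℝ) + (((B ∩ C₂) ∩ A).card : ℝ) = ((B ∩ C₂).card : ℝ) := by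
      exact_mod_cast congrArg (Nat.cast : ℕ → ℝ) h1
    linarith
  -- symmDiff card
  have hsymm : ((symmDiff A B).card : ℝ) = ((A \ B).card : ℝ) + ((B \ A).card : ℝ) := by
    have h : symmDiff A B = (A \ B) ∪ (B \ A) := by
      rw [symmDiff_def]; rfl
    rw [h, Finset.card_union_of_disjoint (disjoint_sdiff_sdiff)]
    push_cast; ring
  -- positivity of |A|, |B|
  have hCpos₁ : (2 : ℝ) ≤ (C₁.card : ℝ) := by exact_mod_cast hcard₁
  have hCpos₂ : (2 : ℝ) ≤ (C₂.card : ℝ) := by exact_mod_cast hcard₂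
  have hAineq : ((A ∩ C₁).card : ℝ) ≤ (A.card : ℝ) := by
    exact_mod_cast Finset.card_le_card (inter_subset_left)
  have hBineq : ((B ∩ C₂).card : ℝ) ≤ (B.card : ℝ) := by
    exact_mod_cast Finset.card_le_card (inter_subset_left)
  have hfac : (0 : ℝ) < 1 - ε / 8 := by linarith
  have hm1 := mul_le_mul_of_nonneg_left hCpos₁ hfac.le
  have hm2 := mul_le_mul_of_nonneg_left hCpos₂ hfac.le
  have hApos : (0 : ℝ) < (A.card : ℝ) := by linarith [hm1, h1b, hAineq]
  have hBpos : (0 : ℝ) < (B.card : ℝ) := by linarith [hm2, h2b, hBineq]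
  have hAbig : (1 - ε / 8) * (A.card : ℝ) ≤ ((A ∩ C₁).card : ℝ) := by linarith [hsplitA, h1a]
  have hBbig : (1 - ε / 8) * (B.card : ℝ) ≤ ((B ∩ C₂).card : ℝ) := by linarith [hsplitB, h2a]
  have hmin := min_le_left ((A.card : ℝ)) ((B.card : ℝ))
  have hp1 := mul_le_mul_of_nonneg_left hmin hε.le
  have hp2 := mul_le_mul_of_nonneg_right hε' hApos.le
  have hp3 := mul_le_mul_of_nonneg_right hε' hBpos.le
  rw [hsymm]
  linarith [hAB, hBA, hBC1, hAC2, hAbig, hBbig, hApos, hBpos, hp1, hp2, hp3]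
end

section
/- Let G be a finite simple graph, let 0 < ε ≤ 1/50, let C be an important group of vertices, and let S be a set of vertices containing some vertex u ∈ C with |N(u) ∩ S| ≥ (1−2ε)·|N(u)| and |N(u) ∩ S| ≥ (1−2ε)·|S|. Then |S ∩ C| ≥ (1−2.5ε)·|S|, |S ∩ C| ≥ (1−2.5ε)·|C|, and |C \ S| ≤ 2.5ε·|S|. -/
open Finset

theorem stmt12 {V : Type*} [Fintype V] [DecidableEq V]
    (G : SimpleGraph V) [DecidableRel G.Adj]
    (ε : ℝ) (hε : 0 < ε) (hε' : ε ≤ 1 / 50)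
    (C S : Finset V) (hC : ImportantGroup G ε C)
    (u : V) (huC : u ∈ C) (huS : u ∈ S)
    (h1 : (1 - 2 * ε) * ((G.neighborFinset u).card : ℝ) ≤
      ((G.neighborFinset u ∩ S).card : ℝ))
    (h2 : (1 - 2 * ε) * (S.card : ℝ) ≤ ((G.neighborFinset u ∩ S).card : ℝ)) :
    (1 - 2.5 * ε) * (S.card : ℝ) ≤ ((S ∩ C).card : ℝ) ∧
    (1 - 2.5 * ε) * (C.card : ℝ) ≤ ((S ∩ C).card : ℝ) ∧
    ((C \ S).card : ℝ) ≤ 2.5 * ε * (S.card : ℝ) := by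
  set N := G.neighborFinset u with hN
  obtain ⟨hi, hii⟩ := hC u huC
  have hd1 : ((N \ S).card : ℝ) + ((N ∩ S).card : ℝ) = (N.card : ℝ) := by
    exact_mod_cast congrArg (Nat.cast : ℕ → ℝ) (card_sdiff_add_card_inter N S)
  have hd2 : ((N \ C).card : ℝ) + ((N ∩ C).card : ℝ) = (N.card : ℝ) := by
    exact_mod_cast congrArg (Nat.cast : ℕ → ℝ) (card_sdiff_add_card_inter N C)
  have hd3 : ((C \ N).card : ℝ) + ((N ∩ C).card : ℝ) = (C.card : ℝ) := by
    rw [inter_comm]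
    exact_mod_cast congrArg (Nat.cast : ℕ → ℝ) (card_sdiff_add_card_inter C N)
  have hv : ((N ∩ S).card : ℝ) ≤ ((N ∩ S ∩ C).card : ℝ) + ((N \ C).card : ℝ) := by
    have he := card_sdiff_add_card_inter (N ∩ S) C
    have hle := card_le_card (sdiff_subset_sdiff inter_subset_left le_rfl :
      (N ∩ S) \ C ⊆ N \ C)
    have : (N ∩ S).card ≤ (N ∩ S ∩ C).card + (N \ C).card := by omega
    exact_mod_cast this
  have hvi : ((N ∩ S ∩ C).card : ℝ) ≤ ((S ∩ C).card : ℝ) := by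
    exact_mod_cast card_le_card (inter_subset_inter inter_subset_right le_rfl)
  have hvii : ((N ∩ C).card : ℝ) ≤ ((N ∩ S ∩ C).card : ℝ) + ((N \ S).card : ℝ) := by
    have hsub : N ∩ C ⊆ (N ∩ S ∩ C) ∪ (N \ S) := by
      intro x hx
      simp only [mem_inter, mem_union, mem_sdiff] at *
      by_cases hxS : x ∈ S <;> tauto
    have hle := card_le_card hsub
    have hun := card_union_le (N ∩ S ∩ C) (N \ S)
    have : (N ∩ C).card ≤ (N ∩ S ∩ C).card + (N \ S).card := by omega
    exact_mod_cast this
  have hx1 : ((N ∩ S).card : ℝ) ≤ (S.card : ℝ) := by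
    exact_mod_cast card_le_card inter_subset_right
  have hx2 : ((N ∩ C).card : ℝ) ≤ (C.card : ℝ) := by
    exact_mod_cast card_le_card inter_subset_right
  have hxi : ((C \ S).card : ℝ) ≤ ((C \ N).card : ℝ) + ((N \ S).card : ℝ) := by
    have hsub : C \ S ⊆ (C \ N) ∪ (N \ S) := by
      intro x hx
      simp only [mem_union, mem_sdiff] at *
      by_cases hxN : x ∈ N <;> tauto
    have hle := card_le_card hsub
    have hun := card_union_le (C \ N) (N \ S)
    have : (C \ S).card ≤ (C \ N).card + (N \ S).card := by omega
    exact_mod_cast this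
  have hc0 : (0:ℝ) ≤ (C.card : ℝ) := Nat.cast_nonneg _
  have hs0 : (0:ℝ) ≤ (S.card : ℝ) := Nat.cast_nonneg _
  have hd0 : (0:ℝ) ≤ (N.card : ℝ) := Nat.cast_nonneg _
  -- d bounds
  have hds : (1 - 2*ε) * (N.card : ℝ) ≤ (S.card : ℝ) := le_trans h1 hx1
  have hdc : (1 - ε/8) * (N.card : ℝ) ≤ (C.card : ℝ) := by linarith
  have hcd : (1 - ε/8) * (C.card : ℝ) ≤ (N.card : ℝ) := by linarith
  have hq : (0:ℝ) ≤ (1/50 - ε) * ε := mul_nonneg (by linarith) hε.le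
  -- product inequalities: treat ε*d, ε*s, ε*c as atoms
  have p1 : ε * (N.card : ℝ) ≤ (25/24) * (ε * (S.card : ℝ)) := by
    have m1 := mul_le_mul_of_nonneg_left hds hε.le
    have m2 := mul_nonneg hq hd0
    ring_nf at m1 m2 ⊢
    linarith
  have p2 : ε * (N.card : ℝ) ≤ (400/399) * (ε * (C.card : ℝ)) := by
    have m1 := mul_le_mul_of_nonneg_left hdc hε.le
    have m2 := mul_nonneg hq hd0
    ring_nf at m1 m2 ⊢
    linarith
  have p3 : ε * (C.card : ℝ) ≤ (400/399) * (ε * (N.card : ℝ)) := by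
    have m1 := mul_le_mul_of_nonneg_left hcd hε.le
    have m2 := mul_nonneg hq hc0
    ring_nf at m1 m2 ⊢
    linarith
  refine ⟨by linarith, by linarith, by linarith⟩
end

section
/- Let G be a finite simple graph, let 0 < ε ≤ 1/50 and δ = 14, and let S be a set of vertices such that every v ∈ S satisfies |N(v) ∩ S| ≥ (1−δε)·|S| and |N(v) \ S| ≤ δε·|S|. Let C be an important group of vertices with |S ∩ C| ≤ (2/3)·|S|. Then S ∩ C = ∅. -/
open Finset

theorem stmt13 {V : Type*} [Fintype V] [DecidableEq V]
    (G : SimpleGraph V) [DecidableRel G.Adj]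
    (ε : ℝ) (hε : 0 < ε) (hε' : ε ≤ 1 / 50)
    (S C : Finset V)
    -- δ = 14: every `v ∈ S` has at least `(1 - δε)|S|` neighbors in `S`
    -- and at most `δε|S|` neighbors outside `S`
    (hS : ∀ v ∈ S,
      (1 - 14 * ε) * (S.card : ℝ) ≤ ((G.neighborFinset v ∩ S).card : ℝ) ∧
      ((G.neighborFinset v \ S).card : ℝ) ≤ 14 * ε * (S.card : ℝ))
    (hC : ImportantGroup G ε C)
    (hSC : ((S ∩ C).card : ℝ) ≤ 2 / 3 * (S.card : ℝ)) :
    S ∩ C = ∅ := by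
  by_contra h
  obtain ⟨v, hv⟩ := nonempty_iff_ne_empty.mpr h
  rw [mem_inter] at hv
  obtain ⟨hvS, hvC⟩ := hv
  obtain ⟨h1, h2⟩ := hS v hvS
  obtain ⟨h3, -⟩ := hC v hvC
  have hScard : (1:ℝ) ≤ S.card := by exact_mod_cast card_pos.mpr ⟨v, hvS⟩
  set N := G.neighborFinset v with hN
  have hdegsplit : (N ∩ S).card + (N \ S).card = N.card :=
    card_inter_add_card_sdiff N S
  have hns : ((N ∩ S).card : ℝ) ≤ S.card := by
    exact_mod_cast card_le_card (inter_subset_right)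
  have hdeg : (N.card : ℝ) ≤ (1 + 14 * ε) * S.card := by
    have := hdegsplit
    have h' : ((N ∩ S).card : ℝ) + ((N \ S).card : ℝ) = (N.card : ℝ) := by
      exact_mod_cast this
    nlinarith
  have hsub : N ∩ S ⊆ (S ∩ C) ∪ (N \ C) := by
    intro u hu
    simp only [mem_inter, mem_union, mem_sdiff] at *
    by_cases hc : u ∈ C
    · exact Or.inl ⟨hu.2, hc⟩
    · exact Or.inr ⟨hu.1, hc⟩
  have hkey : ((N ∩ S).card : ℝ) ≤ ((S ∩ C).card : ℝ) + ((N \ C).card : ℝ) := by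
    calc ((N ∩ S).card : ℝ) ≤ (((S ∩ C) ∪ (N \ C)).card : ℝ) := by
          exact_mod_cast card_le_card hsub
      _ ≤ ((S ∩ C).card : ℝ) + ((N \ C).card : ℝ) := by
          exact_mod_cast card_union_le _ _
  nlinarith [mul_le_mul_of_nonneg_left hdeg (by positivity : (0:ℝ) ≤ ε / 8)]
end

section
/- Let ρ > 0 and M > 0 with M/ρ ≥ e^e, and let A : [0, 1/3] → ℝ be differentiable and nondecreasing with A(0) ≥ ρ and A(1/3) ≤ M/2. Then there exists r ∈ [0, 1/3] such that A'(r) ≤ 3·( ln ln(M/ρ) − ln ln 2 )·A(r)·ln(M / A(r)). -/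
/-!
With `g r = log (log (M / A r))` one has `g' = -A' / (A · log (M / A))`, so the mean value
theorem on `[0, 1/3]` yields a point where `A' = 3 (g 0 - g (1/3)) · A · log (M / A)`.
Monotonicity squeezes `A` between `ρ` and `M / 2`, which bounds `g 0 ≤ log log (M / ρ)` and
`g (1/3) ≥ log log 2`.
-/

open Real Set

theorem HasDerivAt.log_log_const_div {A : ℝ → ℝ} {A' M x : ℝ} (hA : HasDerivAt A A' x)
    (hpos : 0 < A x) (hlt : A x < M) :
    HasDerivAt (fun r => Real.log (Real.log (M / A r))) (-A' / (A x * Real.log (M / A x))) x := by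
  have hM : 0 < M := hpos.trans hlt
  have hlog : 0 < Real.log (M / A x) := log_pos ((one_lt_div hpos).2 hlt)
  have h := (((hasDerivAt_const x M).div hA hpos.ne').log
    (div_pos hM hpos).ne').log hlog.ne'
  convert h using 1
  · rfl
  · simp only [Pi.div_apply]
    field_simp
    ring

theorem exists_deriv_eq_log_log_slope_mul {A : ℝ → ℝ} {a b M : ℝ} (hab : a < b)
    (hcont : ContinuousOn A (Icc a b)) (hdiff : ∀ x ∈ Ioo a b, DifferentiableAt ℝ A x)
    (hpos : ∀ x ∈ Icc a b, 0 < A x) (hlt : ∀ x ∈ Icc a b, A x < M) :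
    ∃ r ∈ Ioo a b, deriv A r =
      (log (log (M / A a)) - log (log (M / A b))) / (b - a) * A r * log (M / A r) := by
  have hlog : ∀ x ∈ Icc a b, 0 < log (M / A x) := fun x hx =>
    log_pos ((one_lt_div (hpos x hx)).2 (hlt x hx))
  have hgcont : ContinuousOn (fun r => log (log (M / A r))) (Icc a b) :=
    ((continuousOn_const.div hcont fun x hx => (hpos x hx).ne').log
      fun x hx => (div_pos ((hpos x hx).trans (hlt x hx)) (hpos x hx)).ne').log
      fun x hx => (hlog x hx).ne'
  obtain ⟨r, hr, hslope⟩ := exists_hasDerivAt_eq_slope _ _ hab hgcont fun x hx =>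
    (hdiff x hx).hasDerivAt.log_log_const_div (hpos x (Ioo_subset_Icc_self hx))
      (hlt x (Ioo_subset_Icc_self hx))
  have hr' := Ioo_subset_Icc_self hr
  refine ⟨r, hr, ?_⟩
  rw [div_eq_iff (mul_pos (hpos r hr') (hlog r hr')).ne'] at hslope
  linear_combination -hslope

theorem log_log_div_le_log_log_div {M x y : ℝ} (hx : 0 < x) (hxy : x ≤ y) (hy : y < M) :
    log (log (M / y)) ≤ log (log (M / x)) := by
  have hy0 : 0 < y := hx.trans_le hxy
  have hM : 0 < M := hy0.trans hy
  exact log_le_log (log_pos ((one_lt_div hy0).2 hy))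
    (log_le_log (div_pos hM hy0) (div_le_div_of_nonneg_left hM.le hx hxy))

theorem stmt15_general (ρ M : ℝ) (hρ : 0 < ρ)
    (A : ℝ → ℝ)
    (hdiff : ∀ r ∈ Set.Icc (0 : ℝ) (1 / 3), DifferentiableAt ℝ A r)
    (hmono : MonotoneOn A (Set.Icc (0 : ℝ) (1 / 3)))
    (hA0 : ρ ≤ A 0) (hA3 : A (1 / 3) ≤ M / 2) :
    ∃ r ∈ Set.Icc (0 : ℝ) (1 / 3),
      deriv A r ≤ 3 * (Real.log (Real.log (M / ρ)) - Real.log (Real.log 2)) *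
        A r * Real.log (M / A r) := by
  have h0 : (0 : ℝ) ∈ Icc (0 : ℝ) (1 / 3) := by norm_num
  have h3 : (1 / 3 : ℝ) ∈ Icc (0 : ℝ) (1 / 3) := by norm_num
  have hpos : ∀ x ∈ Icc (0 : ℝ) (1 / 3), 0 < A x := fun x hx =>
    hρ.trans_le (hA0.trans (hmono h0 hx hx.1))
  have hlt : ∀ x ∈ Icc (0 : ℝ) (1 / 3), A x < M := fun x hx => by
    linarith [hpos x hx, hmono hx h3 hx.2]
  obtain ⟨r, hr, hAr⟩ := exists_deriv_eq_log_log_slope_mul (by norm_num)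
    (fun x hx => (hdiff x hx).continuousAt.continuousWithinAt)
    (fun x hx => hdiff x (Ioo_subset_Icc_self hx)) hpos hlt
  have hr' := Ioo_subset_Icc_self hr
  have hg0 : log (log (M / A 0)) ≤ log (log (M / ρ)) :=
    log_log_div_le_log_log_div hρ hA0 (hlt 0 h0)
  have hg3 : log (log 2) ≤ log (log (M / A (1 / 3))) := by
    have hM : 0 < M := (hpos 0 h0).trans (hlt 0 h0)
    have h := log_log_div_le_log_log_div (hpos _ h3) hA3 (half_lt_self hM)
    rwa [div_div_cancel₀ hM.ne'] at h
  have hslope : (log (log (M / A 0)) - log (log (M / A (1 / 3)))) / (1 / 3 - 0) ≤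
      3 * (log (log (M / ρ)) - log (log 2)) := by
    rw [sub_zero, div_div_eq_mul_div, div_one]
    linarith
  have hfac : 0 ≤ A r * log (M / A r) :=
    mul_nonneg (hpos r hr').le (log_nonneg ((one_le_div (hpos r hr')).2 (hlt r hr').le))
  refine ⟨r, hr', hAr.trans_le ?_⟩
  simpa only [mul_assoc] using mul_le_mul_of_nonneg_right hslope hfac

theorem stmt15 (ρ M : ℝ) (hρ : 0 < ρ) (hM : 0 < M)
    (hMρ : Real.exp (Real.exp 1) ≤ M / ρ)
    (A : ℝ → ℝ)
    (hdiff : ∀ r ∈ Set.Icc (0 : ℝ) (1 / 3), DifferentiableAt ℝ A r)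
    (hmono : MonotoneOn A (Set.Icc (0 : ℝ) (1 / 3)))
    (hA0 : ρ ≤ A 0) (hA3 : A (1 / 3) ≤ M / 2) :
    ∃ r ∈ Set.Icc (0 : ℝ) (1 / 3),
      deriv A r ≤ 3 * (Real.log (Real.log (M / ρ)) - Real.log (Real.log 2)) *
        A r * Real.log (M / A r) :=
  stmt15_general ρ M hρ A hdiff hmono hA0 hA3
end

section
/- If T : ℕ → ℝ satisfies T(d) ≥ 2^d·d/10 + ∑_{t=1}^{d−1} T(t) for every d ≥ 1, then T(d) ≥ (1/40)·2^d·d² for every d ≥ 1. -/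
lemma stmt17_aux (d : ℕ) :
    ∑ t ∈ Finset.Ico 1 d, (2 : ℝ) ^ t * (t : ℝ) ^ 2
      = 2 ^ d * ((d : ℝ) ^ 2 - 4 * d + 6) - 6 := by
  induction d with
  | zero => simp
  | succ n ih =>
    rcases Nat.eq_zero_or_pos n with rfl | hn
    · norm_num
    · rw [Finset.sum_Ico_succ_top hn, ih]
      push_cast
      ring

theorem stmt17 (T : ℕ → ℝ)
    (hrec : ∀ d : ℕ, 1 ≤ d →
      (2 : ℝ) ^ d * (d : ℝ) / 10 + ∑ t ∈ Finset.Ico 1 d, T t ≤ T d) :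
    ∀ d : ℕ, 1 ≤ d → (1 / 40 : ℝ) * 2 ^ d * (d : ℝ) ^ 2 ≤ T d := by
  intro d
  induction d using Nat.strong_induction_on with
  | _ d ih =>
    intro hd
    have h := hrec d hd
    have hsum : ∑ t ∈ Finset.Ico 1 d, (1 / 40 : ℝ) * 2 ^ t * (t : ℝ) ^ 2
        ≤ ∑ t ∈ Finset.Ico 1 d, T t := by
      apply Finset.sum_le_sum
      intro t ht
      have ht' := Finset.mem_Ico.mp ht
      exact ih t ht'.2 ht'.1
    have hcf : ∑ t ∈ Finset.Ico 1 d, (1 / 40 : ℝ) * 2 ^ t * (t : ℝ) ^ 2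
        = (1 / 40 : ℝ) * (2 ^ d * ((d : ℝ) ^ 2 - 4 * d + 6) - 6) := by
      rw [← stmt17_aux d, Finset.mul_sum]
      apply Finset.sum_congr rfl
      intro t _
      ring
    have h2 : (1 : ℝ) ≤ 2 ^ d := one_le_pow₀ (by norm_num)
    have hd1 : (1 : ℝ) ≤ (d : ℝ) := by exact_mod_cast hd
    nlinarith [hsum, hcf, h, h2, hd1]
end

section
/- Let x be distance data on [n] and let 𝒰' be the set of triples of distinct points that are ultrametric-unbalanced under x. Then for every ultrametric y on [n] and every fractional packing p of 𝒰' (i.e., p : 𝒰' → ℝ≥0 with ∑_{t ∈ 𝒰' : e ⊂ t} p_t ≤ 1 for every unordered pair e), one has ∑_{t ∈ 𝒰'} p_t ≤ |{ e : x(e) ≠ y(e) }|. In particular, the value of any fractional packing of ultrametric-unbalanced triples is a lower bound on the ℓ0 distance from x to the set of ultrametrics. -/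
open Finset
open scoped Classical

/-- `t` is a triple of three distinct points that is ultrametric-unbalanced under `x`. -/
def IsUltraUnbalancedTriple {n : ℕ} (x : Fin n → Fin n → ℝ) (t : Finset (Fin n)) : Prop :=
  ∃ a b c : Fin n, a ≠ b ∧ a ≠ c ∧ b ≠ c ∧ t = {a, b, c} ∧ ¬ UltraBalanced x a b c

theorem stmt19 {n : ℕ} (x y : Fin n → Fin n → ℝ)
    (hxsymm : ∀ a b, x a b = x b a) (hxnonneg : ∀ a b, 0 ≤ x a b)
    (hysymm : ∀ a b, y a b = y b a) (hynonneg : ∀ a b, 0 ≤ y a b)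
    (hyultra : ∀ a b c : Fin n, a ≠ b → a ≠ c → b ≠ c → y a b ≤ max (y a c) (y b c))
    -- a fractional packing of the ultrametric-unbalanced triples:
    (p : Finset (Fin n) → ℝ)
    (hp0 : ∀ t, 0 ≤ p t)
    (hsupp : ∀ t, p t ≠ 0 → IsUltraUnbalancedTriple x t)
    (hpack : ∀ a b : Fin n, a ≠ b →
      ∑ t ∈ Finset.univ.filter (fun t : Finset (Fin n) => a ∈ t ∧ b ∈ t), p t ≤ 1) :
    ∑ t : Finset (Fin n), p t ≤
      ((Finset.univ.filter
        (fun e : Fin n × Fin n => e.1 < e.2 ∧ x e.1 e.2 ≠ y e.1 e.2)).card : ℝ) := by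
  set Bad : Finset (Fin n × Fin n) :=
    Finset.univ.filter (fun e : Fin n × Fin n => e.1 < e.2 ∧ x e.1 e.2 ≠ y e.1 e.2) with hBad
  set S : Finset (Finset (Fin n)) := Finset.univ.filter (fun t => p t ≠ 0) with hS
  have hsum : ∑ t : Finset (Fin n), p t = ∑ t ∈ S, p t := by
    rw [hS, Finset.sum_filter_ne_zero]
  -- every triple in the support contains a bad pair
  have key : ∀ t ∈ S, ∃ e : Fin n × Fin n, e ∈ Bad ∧ e.1 ∈ t ∧ e.2 ∈ t := by
    intro t ht
    rw [hS, Finset.mem_filter] at ht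
    obtain ⟨a, b, c, hab, hac, hbc, hteq, hnb⟩ := hsupp t ht.2
    -- some pair among ab, ac, bc differs between x and y
    have hdiff : (x a b ≠ y a b) ∨ (x a c ≠ y a c) ∨ (x b c ≠ y b c) := by
      by_contra h
      push_neg at h
      obtain ⟨h1, h2, h3⟩ := h
      apply hnb
      refine ⟨?_, ?_, ?_⟩
      · rw [h1, h2, h3]; exact hyultra a b c hab hac hbc
      · rw [h1, h2, h3]
        have := hyultra a c b hac hab hbc.symm
        rwa [hysymm c b] at this
      · rw [h1, h2, h3]
        have := hyultra b c a hbc (Ne.symm hab) (Ne.symm hac)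
        rwa [hysymm b a, hysymm c a] at this
    have mkpair : ∀ u v : Fin n, u ≠ v → x u v ≠ y u v → u ∈ t → v ∈ t →
        ∃ e : Fin n × Fin n, e ∈ Bad ∧ e.1 ∈ t ∧ e.2 ∈ t := by
      intro u v huv hxy hu hv
      rcases lt_or_gt_of_ne huv with h | h
      · exact ⟨(u, v), by simp [hBad, h, hxy], hu, hv⟩
      · refine ⟨(v, u), ?_, hv, hu⟩
        rw [hBad, Finset.mem_filter]
        refine ⟨Finset.mem_univ _, h, ?_⟩
        rw [hxsymm v u, hysymm v u]; exact hxy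
    have hat : a ∈ t := by rw [hteq]; simp
    have hbt : b ∈ t := by rw [hteq]; simp
    have hct : c ∈ t := by rw [hteq]; simp
    rcases hdiff with h | h | h
    · exact mkpair a b hab h hat hbt
    · exact mkpair a c hac h hat hct
    · exact mkpair b c hbc h hbt hct
  by_cases hSn : S.Nonempty
  · obtain ⟨t0, ht0⟩ := hSn
    obtain ⟨e0, _, _⟩ := key t0 ht0
    haveI : Inhabited (Fin n × Fin n) := ⟨e0⟩
    set g : Finset (Fin n) → Fin n × Fin n := fun t =>
      if h : ∃ e : Fin n × Fin n, e ∈ Bad ∧ e.1 ∈ t ∧ e.2 ∈ t then h.choose else default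
      with hg
    have hgmem : ∀ t ∈ S, g t ∈ Bad ∧ (g t).1 ∈ t ∧ (g t).2 ∈ t := by
      intro t ht
      have h := key t ht
      rw [hg]
      simp only [dif_pos h]
      exact h.choose_spec
    have hmaps : ∀ t ∈ S, g t ∈ Bad := fun t ht => (hgmem t ht).1
    rw [hsum, ← Finset.sum_fiberwise_of_maps_to hmaps]
    have hbound : ∀ e ∈ Bad, ∑ t ∈ S.filter (fun t => g t = e), p t ≤ 1 := by
      intro e he
      have he' : e.1 < e.2 := by
        rw [hBad, Finset.mem_filter] at he; exact he.2.1
      refine le_trans ?_ (hpack e.1 e.2 (ne_of_lt he'))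
      apply Finset.sum_le_sum_of_subset_of_nonneg
      · intro t ht
        rw [Finset.mem_filter] at ht ⊢
        obtain ⟨ht1, ht2⟩ := ht
        rw [hS, Finset.mem_filter] at ht1
        have := hgmem t (by rw [hS, Finset.mem_filter]; exact ht1)
        rw [ht2] at this
        exact ⟨Finset.mem_univ _, this.2.1, this.2.2⟩
      · intro t _ _; exact hp0 t
    calc ∑ e ∈ Bad, ∑ t ∈ S.filter (fun t => g t = e), p t
        ≤ ∑ _e ∈ Bad, (1 : ℝ) := Finset.sum_le_sum hbound
      _ = (Bad.card : ℝ) := by simp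
  · rw [Finset.not_nonempty_iff_eq_empty] at hSn
    rw [hsum, hSn, Finset.sum_empty]
    positivity
end
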